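/- arXiv:2211.14768 — 2 statements merged into one kernel-verified Lean document; each statement's English description precedes it below -/
import Mathlib

section
/- Let a₁, a₂ > 0 and τ ∈ ℝ. Let μ = (μ(1), μ(2)) be a two-armed instance with μ₂(1) ≤ τ < μ₂(2) and μ₁(2) ≤ μ₁(1) (so arm 1 is optimal and arm 2 is a deceiver). Then the infimum of D(μ′, μ) over all alternative instances μ′ with a unique optimal arm whose correct output (optimal arm, feasibility flag) differs from that of μ equals min{ a₂(τ − μ₂(1))², a₂(μ₂(2) − τ)² }. -/
/-!
An alternative to `μ` either is infeasible, and then arm `0` has crossed above `τ`, which costs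
at least `a₂ (τ - μ₂(0))²`; or it is feasible with optimal arm `1`, and then arm `1` has crossed
down to `τ`, which costs at least `a₂ (μ₂(1) - τ)²`. Both bounds are approached: raise arm `0` to
`τ + δ`, or lower arm `1` to `(μ₁(1) - δ, τ)`, which beats arm `0` because `μ₁(1) ≤ μ₁(0)`, and
let `δ → 0⁺`.
-/

/-- The divergence between two-armed instances `μ'` and `μ`:
`D(μ', μ) = max_{j∈{0,1}} [a₁(μ₁(j) − μ'₁(j))² + a₂(μ₂(j) − μ'₂(j))²]`. -/
noncomputable def InstDiv (a₁ a₂ : ℝ) (μ' μ : Fin 2 → ℝ × ℝ) : ℝ :=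
  max (a₁ * ((μ 0).1 - (μ' 0).1) ^ 2 + a₂ * ((μ 0).2 - (μ' 0).2) ^ 2)
      (a₁ * ((μ 1).1 - (μ' 1).1) ^ 2 + a₂ * ((μ 1).2 - (μ' 1).2) ^ 2)

/-- The instance is feasible: some arm satisfies the constraint. -/
def InstFeasible (τ : ℝ) (μ : Fin 2 → ℝ × ℝ) : Prop := ∃ i, (μ i).2 ≤ τ

/-- Arm `j` is the (unique) optimal arm of the two-armed instance `μ` with threshold `τ`:
in a feasible instance it is the feasible arm with strictly smaller objective value among
feasible arms; in an infeasible instance it is the arm with strictly smaller constraint value. -/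
def IsOptArm (τ : ℝ) (μ : Fin 2 → ℝ × ℝ) (j : Fin 2) : Prop :=
  (InstFeasible τ μ ∧ (μ j).2 ≤ τ ∧ ∀ i, i ≠ j → (μ i).2 ≤ τ → (μ j).1 < (μ i).1)
  ∨ (¬ InstFeasible τ μ ∧ ∀ i, i ≠ j → (μ j).2 < (μ i).2)

/-- `μ'` is an alternative instance to `μ`: it has a (unique) optimal arm and its correct
output — the pair (optimal arm, feasibility flag) — differs from that of `μ`. -/
def AltInstance (τ : ℝ) (μ' μ : Fin 2 → ℝ × ℝ) : Prop :=
  ∃ j' j : Fin 2, IsOptArm τ μ' j' ∧ IsOptArm τ μ j ∧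
    (j' ≠ j ∨ ¬ (InstFeasible τ μ' ↔ InstFeasible τ μ))

open Filter Set Topology

theorem csInf_le_of_tendsto {ι : Type*} {l : Filter ι} [l.NeBot] {S : Set ℝ} {f : ι → ℝ} {b : ℝ}
    (hS : BddBelow S) (hf : Tendsto f l (𝓝 b)) (hmem : ∀ᶠ i in l, f i ∈ S) : sInf S ≤ b :=
  ge_of_tendsto hf (hmem.mono fun _ hi => csInf_le hS hi)

theorem sq_sub_le_sq_sub_of_mem_uIcc {x y τ : ℝ} (h : τ ∈ uIcc x y) :
    (τ - x) ^ 2 ≤ (x - y) ^ 2 := by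
  rw [← sq_abs, ← sq_abs (x - y), abs_sub_comm x]
  exact pow_le_pow_left₀ (abs_nonneg _) (abs_sub_left_of_mem_uIcc h) 2

noncomputable def armDiv (a₁ a₂ : ℝ) (p' p : ℝ × ℝ) : ℝ :=
  a₁ * (p.1 - p'.1) ^ 2 + a₂ * (p.2 - p'.2) ^ 2

theorem armDiv_le_instDiv (a₁ a₂ : ℝ) (μ' μ : Fin 2 → ℝ × ℝ) (i : Fin 2) :
    armDiv a₁ a₂ (μ' i) (μ i) ≤ InstDiv a₁ a₂ μ' μ := by
  fin_cases i
  exacts [le_max_left _ _, le_max_right _ _]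

theorem le_armDiv_of_mem_uIcc {a₁ a₂ τ : ℝ} (ha₁ : 0 ≤ a₁) (ha₂ : 0 ≤ a₂) {p' p : ℝ × ℝ}
    (h : τ ∈ uIcc p.2 p'.2) : a₂ * (τ - p.2) ^ 2 ≤ armDiv a₁ a₂ p' p := by
  have := mul_le_mul_of_nonneg_left (sq_sub_le_sq_sub_of_mem_uIcc h) ha₂
  unfold armDiv
  linarith [mul_nonneg ha₁ (sq_nonneg (p.1 - p'.1))]

theorem continuous_instDiv (a₁ a₂ : ℝ) (μ : Fin 2 → ℝ × ℝ) :
    Continuous fun μ' => InstDiv a₁ a₂ μ' μ := by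
  unfold InstDiv
  fun_prop

theorem IsOptArm.unique {τ : ℝ} {μ : Fin 2 → ℝ × ℝ} {j k : Fin 2}
    (hj : IsOptArm τ μ j) (hk : IsOptArm τ μ k) : j = k := by
  by_contra hne
  rcases hj with ⟨hfeas, hjτ, hj⟩ | ⟨hinf, hj⟩ <;> rcases hk with ⟨-, hkτ, hk⟩ | ⟨hinf', hk⟩
  · exact lt_asymm (hj k (Ne.symm hne) hkτ) (hk j hne hjτ)
  · exact hinf' hfeas
  · exact hinf ⟨k, hkτ⟩
  · exact lt_asymm (hj k (Ne.symm hne)) (hk j hne)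

theorem IsOptArm.le_of_feasible {τ : ℝ} {μ : Fin 2 → ℝ × ℝ} {j : Fin 2}
    (hj : IsOptArm τ μ j) (hfeas : InstFeasible τ μ) : (μ j).2 ≤ τ := by
  rcases hj with ⟨-, hjτ, -⟩ | ⟨hinf, -⟩
  exacts [hjτ, absurd hfeas hinf]

theorem lt_of_not_instFeasible {τ : ℝ} {μ : Fin 2 → ℝ × ℝ} (h : ¬ InstFeasible τ μ) (i : Fin 2) :
    τ < (μ i).2 :=
  not_le.1 fun hi => h ⟨i, hi⟩

section Deceiver

variable {a₁ a₂ τ : ℝ} {μ : Fin 2 → ℝ × ℝ}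

theorem isOptArm_zero_of_le_of_lt (hf0 : (μ 0).2 ≤ τ) (hf1 : τ < (μ 1).2) : IsOptArm τ μ 0 := by
  refine Or.inl ⟨⟨0, hf0⟩, hf0, fun i hi hiτ => ?_⟩
  obtain rfl : i = 1 := by omega
  exact absurd hiτ (not_le.2 hf1)

theorem min_le_instDiv_of_altInstance (ha₁ : 0 ≤ a₁) (ha₂ : 0 ≤ a₂) (hf0 : (μ 0).2 ≤ τ)
    (hf1 : τ < (μ 1).2) {μ' : Fin 2 → ℝ × ℝ} (halt : AltInstance τ μ' μ) :
    min (a₂ * (τ - (μ 0).2) ^ 2) (a₂ * ((μ 1).2 - τ) ^ 2) ≤ InstDiv a₁ a₂ μ' μ := by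
  obtain ⟨j', j, hj', hj, hdiff⟩ := halt
  obtain rfl : j = 0 := hj.unique (isOptArm_zero_of_le_of_lt hf0 hf1)
  by_cases hfeas' : InstFeasible τ μ'
  · obtain rfl : j' = 1 := by
      have : j' ≠ 0 := by
        rintro rfl
        exact hdiff.elim (· rfl) (· (iff_of_true hfeas' ⟨0, hf0⟩))
      omega
    have hcross : τ ∈ uIcc (μ 1).2 (μ' 1).2 :=
      mem_uIcc.2 (Or.inr ⟨hj'.le_of_feasible hfeas', hf1.le⟩)
    calc _ ≤ a₂ * ((μ 1).2 - τ) ^ 2 := min_le_right _ _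
      _ = a₂ * (τ - (μ 1).2) ^ 2 := by ring
      _ ≤ armDiv a₁ a₂ (μ' 1) (μ 1) := le_armDiv_of_mem_uIcc ha₁ ha₂ hcross
      _ ≤ _ := armDiv_le_instDiv _ _ _ _ 1
  · have hcross : τ ∈ uIcc (μ 0).2 (μ' 0).2 :=
      mem_uIcc.2 (Or.inl ⟨hf0, (lt_of_not_instFeasible hfeas' 0).le⟩)
    calc _ ≤ a₂ * (τ - (μ 0).2) ^ 2 := min_le_left _ _
      _ ≤ armDiv a₁ a₂ (μ' 0) (μ 0) := le_armDiv_of_mem_uIcc ha₁ ha₂ hcross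
      _ ≤ _ := armDiv_le_instDiv _ _ _ _ 0

theorem altInstance_raise_zero (hf0 : (μ 0).2 ≤ τ) (hf1 : τ < (μ 1).2) {δ : ℝ} (hδ : 0 < δ)
    (hδ₁ : τ + δ < (μ 1).2) : AltInstance τ ![((μ 0).1, τ + δ), μ 1] μ := by
  have hinf : ¬ InstFeasible τ ![((μ 0).1, τ + δ), μ 1] := by
    rintro ⟨i, hi⟩
    fin_cases i
    · exact (lt_add_of_pos_right τ hδ).not_ge hi
    · exact hf1.not_ge hi
  have hopt : IsOptArm τ ![((μ 0).1, τ + δ), μ 1] 0 := by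
    refine Or.inr ⟨hinf, fun i hi => ?_⟩
    obtain rfl : i = 1 := by omega
    simpa using hδ₁
  exact ⟨0, 0, hopt, isOptArm_zero_of_le_of_lt hf0 hf1,
    Or.inr fun hiff => hinf (hiff.2 ⟨0, hf0⟩)⟩

theorem altInstance_lower_one (hf0 : (μ 0).2 ≤ τ) (hf1 : τ < (μ 1).2) (hdec : (μ 1).1 ≤ (μ 0).1)
    {δ : ℝ} (hδ : 0 < δ) : AltInstance τ ![μ 0, ((μ 1).1 - δ, τ)] μ := by
  have hopt : IsOptArm τ ![μ 0, ((μ 1).1 - δ, τ)] 1 := by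
    refine Or.inl ⟨⟨1, le_rfl⟩, le_rfl, fun i hi _ => ?_⟩
    obtain rfl : i = 0 := by omega
    exact (sub_lt_self _ hδ).trans_le hdec
  exact ⟨1, 0, hopt, isOptArm_zero_of_le_of_lt hf0 hf1, Or.inl one_ne_zero⟩

theorem tendsto_instDiv_raise_zero (ha₂ : 0 ≤ a₂) :
    Tendsto (fun δ => InstDiv a₁ a₂ ![((μ 0).1, τ + δ), μ 1] μ) (𝓝 0)
      (𝓝 (a₂ * (τ - (μ 0).2) ^ 2)) := by
  have hcont : Continuous fun δ : ℝ => ![((μ 0).1, τ + δ), μ 1] := by fun_prop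
  refine ((continuous_instDiv a₁ a₂ μ).comp hcont).tendsto' 0 _ ?_
  unfold InstDiv
  simp [sub_sq_comm τ, mul_nonneg ha₂ (sq_nonneg _)]

theorem tendsto_instDiv_lower_one (ha₂ : 0 ≤ a₂) :
    Tendsto (fun δ => InstDiv a₁ a₂ ![μ 0, ((μ 1).1 - δ, τ)] μ) (𝓝 0)
      (𝓝 (a₂ * ((μ 1).2 - τ) ^ 2)) := by
  have hcont : Continuous fun δ : ℝ => ![μ 0, ((μ 1).1 - δ, τ)] := by fun_prop
  refine ((continuous_instDiv a₁ a₂ μ).comp hcont).tendsto' 0 _ ?_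
  unfold InstDiv
  simp [mul_nonneg ha₂ (sq_nonneg _)]

end Deceiver

def altDivergences (a₁ a₂ τ : ℝ) (μ : Fin 2 → ℝ × ℝ) : Set ℝ :=
  { d : ℝ | ∃ μ' : Fin 2 → ℝ × ℝ, AltInstance τ μ' μ ∧ d = InstDiv a₁ a₂ μ' μ }

/-- Lower-bound computation, Case 2: arm `0` is optimal and arm `1` is a deceiver.
The infimum of the divergence over alternative instances equals
`min{a₂(τ − μ₂(1))², a₂(μ₂(2) − τ)²}`. -/
theorem two_arm_lb_deceiver (a₁ a₂ τ : ℝ) (ha₁ : 0 < a₁) (ha₂ : 0 < a₂)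
    (μ : Fin 2 → ℝ × ℝ)
    (hf0 : (μ 0).2 ≤ τ) (hf1 : τ < (μ 1).2) (hdec : (μ 1).1 ≤ (μ 0).1) :
    sInf { d : ℝ | ∃ μ' : Fin 2 → ℝ × ℝ, AltInstance τ μ' μ ∧ d = InstDiv a₁ a₂ μ' μ }
      = min (a₂ * (τ - (μ 0).2) ^ 2) (a₂ * ((μ 1).2 - τ) ^ 2) := by
  change sInf (altDivergences a₁ a₂ τ μ) = _
  have hlower : min (a₂ * (τ - (μ 0).2) ^ 2) (a₂ * ((μ 1).2 - τ) ^ 2) ∈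
      lowerBounds (altDivergences a₁ a₂ τ μ) := by
    rintro _ ⟨μ', halt, rfl⟩
    exact min_le_instDiv_of_altInstance ha₁.le ha₂.le hf0 hf1 halt
  have hbdd : BddBelow (altDivergences a₁ a₂ τ μ) := ⟨_, hlower⟩
  have hraise : ∀ᶠ δ in 𝓝[>] 0,
      InstDiv a₁ a₂ ![((μ 0).1, τ + δ), μ 1] μ ∈ altDivergences a₁ a₂ τ μ := by
    filter_upwards [Ioo_mem_nhdsGT (sub_pos.2 hf1)] with δ hδ
    exact ⟨_, altInstance_raise_zero hf0 hf1 hδ.1 (by linarith [hδ.2]), rfl⟩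
  have hlower_one : ∀ᶠ δ in 𝓝[>] 0,
      InstDiv a₁ a₂ ![μ 0, ((μ 1).1 - δ, τ)] μ ∈ altDivergences a₁ a₂ τ μ :=
    eventually_nhdsWithin_of_forall fun _ hδ => ⟨_, altInstance_lower_one hf0 hf1 hdec hδ, rfl⟩
  refine le_antisymm (le_min ?_ ?_) (le_csInf ?_ hlower)
  · exact csInf_le_of_tendsto hbdd
      ((tendsto_instDiv_raise_zero ha₂.le).mono_left nhdsWithin_le_nhds) hraise
  · exact csInf_le_of_tendsto hbdd
      ((tendsto_instDiv_lower_one ha₂.le).mono_left nhdsWithin_le_nhds) hlower_one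
  · obtain ⟨_, hmem⟩ := hlower_one.exists
    exact ⟨_, hmem⟩
end

section
/- Let a₁, a₂ > 0 and τ ∈ ℝ. Let μ = (μ(1), μ(2)) be a two-armed instance with μ₂(1) ≤ τ < μ₂(2) and μ₁(1) < μ₁(2) (so arm 1 is optimal and arm 2 is infeasible suboptimal). Then the infimum of D(μ′, μ) over all alternative instances μ′ with a unique optimal arm whose correct output (optimal arm, feasibility flag) differs from that of μ is at most min{ a₂(τ − μ₂(1))², max{ a₂(μ₂(2) − τ)², a₁(μ₁(2) − μ₁(1))² } }. -/
/-!
Each term of the minimum is the limit, as `ε → 0⁺`, of the divergence of a family of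
alternative instances (the paper's arm `i` is index `i - 1` here). Raising `μ₂(1)` to `τ + ε`
makes the instance infeasible with the same optimal arm, so only the feasibility flag changes.
Moving arm 2 to `(μ₁(2), τ)` and arm 1 to `(μ₁(2) + ε, μ₂(1))` keeps the instance feasible but
makes arm 2 optimal. Since divergences are nonnegative, the infimum is at most the limit of any
such family.
-/

open Filter Topology

theorem csInf_le_of_tendsto_s2 {α β : Type*} [ConditionallyCompleteLattice α] [TopologicalSpace α]
    [ClosedIciTopology α] {l : Filter β} [l.NeBot] {f : β → α} {s : Set α} {c : α}
    (hs : BddBelow s) (hf : Tendsto f l (𝓝 c)) (hmem : ∀ᶠ x in l, f x ∈ s) : sInf s ≤ c :=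
  ge_of_tendsto hf (hmem.mono fun _ => csInf_le hs)

section TwoArms

variable {a₁ a₂ τ : ℝ} {μ μ' : Fin 2 → ℝ × ℝ}

theorem instDiv_nonneg (ha₁ : 0 ≤ a₁) (ha₂ : 0 ≤ a₂) : 0 ≤ InstDiv a₁ a₂ μ' μ :=
  le_max_of_le_left (by positivity)

theorem continuous_instDiv_left : Continuous fun μ' => InstDiv a₁ a₂ μ' μ := by
  unfold InstDiv
  fun_prop

theorem isOptArm_zero (hf0 : (μ 0).2 ≤ τ) (hopt : (μ 0).1 < (μ 1).1) : IsOptArm τ μ 0 :=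
  Or.inl ⟨⟨0, hf0⟩, hf0, by simp [Fin.forall_fin_two, hopt]⟩

theorem altInstance_raise_constraint (hf0 : (μ 0).2 ≤ τ) (hopt : (μ 0).1 < (μ 1).1) {ε : ℝ}
    (hε : 0 < ε) (hε1 : τ + ε < (μ 1).2) : AltInstance τ ![((μ 0).1, τ + ε), μ 1] μ := by
  have hinfeas : ¬ InstFeasible τ ![((μ 0).1, τ + ε), μ 1] := by
    simp only [InstFeasible, Fin.exists_fin_two, Matrix.cons_val_zero, Matrix.cons_val_one,
      Matrix.cons_val_fin_one, not_or, not_le]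
    exact ⟨lt_add_of_pos_right τ hε, by linarith⟩
  refine ⟨0, 0, Or.inr ⟨hinfeas, by simpa [Fin.forall_fin_two] using hε1⟩,
    isOptArm_zero hf0 hopt, Or.inr fun h => hinfeas (h.2 ⟨0, hf0⟩)⟩

theorem altInstance_swap_optimal (hf0 : (μ 0).2 ≤ τ) (hopt : (μ 0).1 < (μ 1).1) {ε : ℝ}
    (hε : 0 < ε) : AltInstance τ ![((μ 1).1 + ε, (μ 0).2), ((μ 1).1, τ)] μ :=
  ⟨1, 0, Or.inl ⟨⟨1, le_rfl⟩, le_rfl, by simp [Fin.forall_fin_two, hε]⟩,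
    isOptArm_zero hf0 hopt, Or.inl (by decide)⟩

theorem sInf_instDiv_le_of_continuous (ha₁ : 0 ≤ a₁) (ha₂ : 0 ≤ a₂) {ν : ℝ → Fin 2 → ℝ × ℝ}
    (hν : Continuous ν) (halt : ∀ᶠ ε in 𝓝[>] 0, AltInstance τ (ν ε) μ) :
    sInf { d : ℝ | ∃ μ' : Fin 2 → ℝ × ℝ, AltInstance τ μ' μ ∧ d = InstDiv a₁ a₂ μ' μ }
      ≤ InstDiv a₁ a₂ (ν 0) μ := by
  refine csInf_le_of_tendsto_s2 ⟨0, ?_⟩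
    (tendsto_nhdsWithin_of_tendsto_nhds ((continuous_instDiv_left.comp hν).tendsto 0))
    (halt.mono fun ε h => ⟨ν ε, h, rfl⟩)
  rintro d ⟨μ', -, rfl⟩
  exact instDiv_nonneg ha₁ ha₂

end TwoArms

/-- Lower-bound computation, Case 3: arm `0` is optimal and arm `1` is infeasible suboptimal.
The infimum of the divergence over alternative instances is at most
`min{a₂(τ − μ₂(1))², max{a₂(μ₂(2) − τ)², a₁(μ₁(2) − μ₁(1))²}}`. -/
theorem two_arm_lb_infeasible_suboptimal (a₁ a₂ τ : ℝ) (ha₁ : 0 < a₁) (ha₂ : 0 < a₂)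
    (μ : Fin 2 → ℝ × ℝ)
    (hf0 : (μ 0).2 ≤ τ) (hf1 : τ < (μ 1).2) (hopt : (μ 0).1 < (μ 1).1) :
    sInf { d : ℝ | ∃ μ' : Fin 2 → ℝ × ℝ, AltInstance τ μ' μ ∧ d = InstDiv a₁ a₂ μ' μ }
      ≤ min (a₂ * (τ - (μ 0).2) ^ 2)
          (max (a₂ * ((μ 1).2 - τ) ^ 2) (a₁ * ((μ 1).1 - (μ 0).1) ^ 2)) := by
  refine le_min ?_ ?_
  · calc _ ≤ InstDiv a₁ a₂ ![((μ 0).1, τ + 0), μ 1] μ :=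
          sInf_instDiv_le_of_continuous (ν := fun ε => ![((μ 0).1, τ + ε), μ 1]) ha₁.le ha₂.le
            (by fun_prop) <| mem_of_superset (Ioo_mem_nhdsGT (sub_pos.2 hf1)) fun ε hε =>
              altInstance_raise_constraint hf0 hopt hε.1 (by linarith [hε.2])
      _ = a₂ * (τ - (μ 0).2) ^ 2 := by
          simp only [InstDiv, Matrix.cons_val_zero, Matrix.cons_val_one, Matrix.cons_val_fin_one,
            add_zero, zero_add, sub_self, ne_eq, OfNat.ofNat_ne_zero, not_false_eq_true, zero_pow,
            mul_zero]
          rw [max_eq_left (by positivity)]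
          ring
  · calc _ ≤ InstDiv a₁ a₂ ![((μ 1).1 + 0, (μ 0).2), ((μ 1).1, τ)] μ :=
          sInf_instDiv_le_of_continuous (ν := fun ε => ![((μ 1).1 + ε, (μ 0).2), ((μ 1).1, τ)])
            ha₁.le ha₂.le (by fun_prop) <|
              eventually_mem_nhdsWithin.mono fun _ hε => altInstance_swap_optimal hf0 hopt hε
      _ = max (a₂ * ((μ 1).2 - τ) ^ 2) (a₁ * ((μ 1).1 - (μ 0).1) ^ 2) := by
          simp only [InstDiv, Matrix.cons_val_zero, Matrix.cons_val_one, Matrix.cons_val_fin_one,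
            add_zero, zero_add, sub_self, ne_eq, OfNat.ofNat_ne_zero, not_false_eq_true, zero_pow,
            mul_zero]
          rw [max_comm]
          ring_nf
end
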